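/- Let E be a real Hilbert space and L : E → ℝ a differentiable function whose gradient ∇L is γ-Lipschitz for some γ > 0, and let 0 < μ ≤ 1/γ. Let π be a Borel probability measure on E, (Ω, P) a probability space, and V : Ω × E → E a measurable map. Assume that (ω, θ) ↦ L(θ − μ·V(ω, θ)) − L(θ) and (ω, θ) ↦ ‖V(ω, θ) − ∇L(θ)‖² are integrable with respect to P ⊗ π and that θ ↦ ‖∇L(θ)‖² is integrable with respect to π. Then ∫_Ω ∫_E [L(θ − μ·V(ω, θ)) − L(θ)] dπ(θ) dP(ω) ≤ −(μ/2)·( ∫_E ‖∇L(θ)‖² dπ(θ) − ∫_Ω ∫_E ‖V(ω, θ) − ∇L(θ)‖² dπ(θ) dP(ω) ). (Theorem A.2: the expected decrease of the population loss after one aggregated gradient step is controlled by the π-norm of the population gradient minus the delta error of the aggregation rule.) -/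

import Mathlib

/-!
Along the segment `t ↦ θ + t • d`, the function `f` minus its tangent line and minus
`γ t² ‖d‖² / 2` has nonpositive derivative because `∇f` is `γ`-Lipschitz; the mean value
theorem then gives the descent lemma `f (θ + d) ≤ f θ + ⟪∇f θ, d⟫ + γ/2 ‖d‖²`. For the step
`d = -μ v` with `γ μ ≤ 1` this becomes `f (θ - μ v) - f θ ≤ μ/2 (‖v - ∇f θ‖² - ‖∇f θ‖²)`, and
integrating over `P ⊗ π` (Fubini) gives the theorem.
-/

open MeasureTheory

open scoped RealInnerProductSpace Gradient

section DescentLemma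

variable {E : Type*} [NormedAddCommGroup E] [InnerProductSpace ℝ E] [CompleteSpace E]
  {f : E → ℝ} {γ : ℝ}

theorem hasDerivAt_comp_add_smul (hf : Differentiable ℝ f) (x d : E) (t : ℝ) :
    HasDerivAt (fun s : ℝ => f (x + s • d)) ⟪∇ f (x + t • d), d⟫ t := by
  have hline : HasDerivAt (fun s : ℝ => x + s • d) d t := by
    simpa using ((hasDerivAt_id t).smul_const d).const_add x
  exact (hf _).hasGradientAt.hasFDerivAt.comp_hasDerivAt t hline

theorem image_add_le_of_lipschitz_gradient (hf : Differentiable ℝ f)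
    (hlip : ∀ x y : E, ‖∇ f x - ∇ f y‖ ≤ γ * ‖x - y‖) (x d : E) :
    f (x + d) ≤ f x + ⟪∇ f x, d⟫ + γ / 2 * ‖d‖ ^ 2 := by
  set g : ℝ → ℝ := fun t => f (x + t • d) - t * ⟪∇ f x, d⟫ - γ / 2 * t ^ 2 * ‖d‖ ^ 2
  have hg : ∀ t, HasDerivAt g (⟪∇ f (x + t • d), d⟫ - ⟪∇ f x, d⟫ - γ * t * ‖d‖ ^ 2) t := by
    intro t
    have h := ((hasDerivAt_comp_add_smul hf x d t).sub ((hasDerivAt_id t).mul_const ⟪∇ f x, d⟫)).sub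
      (((hasDerivAt_pow 2 t).const_mul (γ / 2)).mul_const (‖d‖ ^ 2))
    exact h.congr_deriv (by push_cast; ring)
  obtain ⟨c, hc, hslope⟩ := exists_hasDerivAt_eq_slope g _ zero_lt_one
    (fun t _ => (hg t).continuousAt.continuousWithinAt) (fun t _ => hg t)
  have hinner_le : ⟪∇ f (x + c • d), d⟫ - ⟪∇ f x, d⟫ ≤ γ * c * ‖d‖ ^ 2 :=
    calc ⟪∇ f (x + c • d), d⟫ - ⟪∇ f x, d⟫
        = ⟪∇ f (x + c • d) - ∇ f x, d⟫ := (inner_sub_left _ _ _).symm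
      _ ≤ ‖∇ f (x + c • d) - ∇ f x‖ * ‖d‖ := real_inner_le_norm _ _
      _ ≤ γ * ‖c • d‖ * ‖d‖ := by gcongr; simpa using hlip (x + c • d) x
      _ = γ * c * ‖d‖ ^ 2 := by rw [norm_smul, Real.norm_of_nonneg hc.1.le]; ring
  simp only [g, one_smul, zero_smul, add_zero] at hslope
  linarith

theorem image_sub_smul_sub_le_of_lipschitz_gradient (hf : Differentiable ℝ f)
    (hlip : ∀ x y : E, ‖∇ f x - ∇ f y‖ ≤ γ * ‖x - y‖) {μ : ℝ} (hμ : 0 ≤ μ) (hγμ : γ * μ ≤ 1)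
    (θ v : E) :
    f (θ - μ • v) - f θ ≤ μ / 2 * (‖v - ∇ f θ‖ ^ 2 - ‖∇ f θ‖ ^ 2) := by
  have hdescent := image_add_le_of_lipschitz_gradient hf hlip θ (-(μ • v))
  rw [← sub_eq_add_neg, inner_neg_right, real_inner_smul_right, norm_neg, norm_smul,
    Real.norm_of_nonneg hμ] at hdescent
  have hquad : γ / 2 * (μ * ‖v‖) ^ 2 ≤ μ / 2 * ‖v‖ ^ 2 := by
    nlinarith [mul_le_mul_of_nonneg_left hγμ (mul_nonneg hμ (sq_nonneg ‖v‖))]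
  rw [norm_sub_sq_real, real_inner_comm]
  linarith

end DescentLemma

theorem expected_one_step_error_general
    {E : Type*} [NormedAddCommGroup E] [InnerProductSpace ℝ E] [CompleteSpace E]
    [MeasurableSpace E]
    (L : E → ℝ) (hL : Differentiable ℝ L)
    (γ : ℝ) (hγ : 0 < γ)
    (hlip : ∀ x y : E, ‖gradient L x - gradient L y‖ ≤ γ * ‖x - y‖)
    (μ : ℝ) (hμ : 0 < μ) (hμγ : μ ≤ 1 / γ)
    (π : Measure E) [IsProbabilityMeasure π]
    {Ω : Type*} [MeasurableSpace Ω] (P : Measure Ω) [IsProbabilityMeasure P]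
    (V : Ω × E → E)
    (hint1 : Integrable (fun p : Ω × E => L (p.2 - μ • V p) - L p.2) (P.prod π))
    (hint2 : Integrable (fun p : Ω × E => ‖V p - gradient L p.2‖ ^ 2) (P.prod π))
    (hint3 : Integrable (fun θ : E => ‖gradient L θ‖ ^ 2) π) :
    ∫ ω, ∫ θ, (L (θ - μ • V (ω, θ)) - L θ) ∂π ∂P ≤
      -(μ / 2) * ((∫ θ, ‖gradient L θ‖ ^ 2 ∂π)
        - ∫ ω, ∫ θ, ‖V (ω, θ) - gradient L θ‖ ^ 2 ∂π ∂P) := by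
  have hγμ : γ * μ ≤ 1 := by rwa [le_div_iff₀ hγ, mul_comm] at hμγ
  have hint3' := hint3.comp_snd P
  calc ∫ ω, ∫ θ, (L (θ - μ • V (ω, θ)) - L θ) ∂π ∂P
      = ∫ p, (L (p.2 - μ • V p) - L p.2) ∂(P.prod π) := (integral_prod _ hint1).symm
    _ ≤ ∫ p, μ / 2 * (‖V p - ∇ L p.2‖ ^ 2 - ‖∇ L p.2‖ ^ 2) ∂(P.prod π) :=
        integral_mono hint1 ((hint2.sub hint3').const_mul _) fun p =>
          image_sub_smul_sub_le_of_lipschitz_gradient hL hlip hμ.le hγμ p.2 (V p)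
    _ = μ / 2 * ((∫ p, ‖V p - ∇ L p.2‖ ^ 2 ∂(P.prod π)) - ∫ p, ‖∇ L p.2‖ ^ 2 ∂(P.prod π)) := by
        rw [integral_const_mul, integral_sub hint2 hint3']
    _ = _ := by
        rw [integral_prod _ hint2, integral_fun_snd (fun θ => ‖∇ L θ‖ ^ 2), probReal_univ, one_smul]
        ring

/-- Theorem A.2: the expected decrease of the population loss after one aggregated
gradient step is controlled by the π-norm of the population gradient minus the
delta error of the aggregation rule. -/
theorem expected_one_step_error
    {E : Type*} [NormedAddCommGroup E] [InnerProductSpace ℝ E] [CompleteSpace E]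
    [MeasurableSpace E] [BorelSpace E]
    (L : E → ℝ) (hL : Differentiable ℝ L)
    (γ : ℝ) (hγ : 0 < γ)
    (hlip : ∀ x y : E, ‖gradient L x - gradient L y‖ ≤ γ * ‖x - y‖)
    (μ : ℝ) (hμ : 0 < μ) (hμγ : μ ≤ 1 / γ)
    (π : Measure E) [IsProbabilityMeasure π]
    {Ω : Type*} [MeasurableSpace Ω] (P : Measure Ω) [IsProbabilityMeasure P]
    (V : Ω × E → E) (hV : Measurable V)
    (hint1 : Integrable (fun p : Ω × E => L (p.2 - μ • V p) - L p.2) (P.prod π))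
    (hint2 : Integrable (fun p : Ω × E => ‖V p - gradient L p.2‖ ^ 2) (P.prod π))
    (hint3 : Integrable (fun θ : E => ‖gradient L θ‖ ^ 2) π) :
    ∫ ω, ∫ θ, (L (θ - μ • V (ω, θ)) - L θ) ∂π ∂P ≤
      -(μ / 2) * ((∫ θ, ‖gradient L θ‖ ^ 2 ∂π)
        - ∫ ω, ∫ θ, ‖V (ω, θ) - gradient L θ‖ ^ 2 ∂π ∂P) :=
  expected_one_step_error_general L hL γ hγ hlip μ hμ hμγ π P V hint1 hint2 hint3
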